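/- Let G be a simple graph in which every vertex has degree at most 4, every edge has at least one endpoint of degree 4, and there are no isolated vertices. Let m be the number of edges and n_i the number of vertices of degree i. Then the arithmetic-geometric index AG(G) = sum over edges uv of (d_u + d_v)/(2*sqrt(d_u * d_v)) satisfies AG(G) = (3/4)*n_1 + (3/sqrt(2) - 1)*n_2 + (21/(4*sqrt(3)) - 3/2)*n_3 + 2*n_4. -/

import Mathlib

noncomputable def agCost (i j : ℕ) : ℝ := ((i : ℝ) + j) / (2 * Real.sqrt ((i : ℝ) * j))

lemma agCost_comm (i j : ℕ) : agCost i j = agCost j i := by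
  unfold agCost; rw [add_comm, mul_comm (i : ℝ) (j : ℝ)]

/-- The arithmetic-geometric index of a graph: the sum over edges `uv` of
`(d_u + d_v) / (2 * sqrt (d_u * d_v))`. -/
noncomputable def agIndex {V : Type*} [Fintype V] (G : SimpleGraph V) [DecidableRel G.Adj] : ℝ :=
  ∑ e ∈ G.edgeFinset,
    Sym2.lift ⟨fun u v => agCost (G.degree u) (G.degree v),
      fun u v => agCost_comm (G.degree u) (G.degree v)⟩ e

/-!
Split the weight `agCost (d u) (d v)` of every edge between its two ends: an end of degree 4
receives `1/2`, an end of degree `i ≠ 4` receives `agCost i 4 - 1/2` (its other end has degree 4).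
Summing the shares around each vertex, a vertex of degree `d` receives `d * agHalf d 4`, which
depends on `d` alone; evaluating it for `d = 1, 2, 3, 4` gives the four coefficients.
-/

namespace SimpleGraph

variable {V M : Type*} [Fintype V] [AddCommMonoid M] (G : SimpleGraph V) [DecidableRel G.Adj]

theorem sum_edgeFinset_lift_eq_sum_darts (f : {f : V → V → M // ∀ u v, f u v = f v u})
    (w : V → V → M) (hw : ∀ u v, G.Adj u v → f.1 u v = w u v + w v u) :
    ∑ e ∈ G.edgeFinset, Sym2.lift f e = ∑ d : G.Dart, w d.fst d.snd := by
  classical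
  rw [← Finset.sum_fiberwise_of_maps_to (g := Dart.edge) (t := G.edgeFinset)
    fun d _ => mem_edgeFinset.2 d.edge_mem]
  refine Finset.sum_congr rfl fun e he => ?_
  induction e with
  | _ u v =>
    have huv : G.Adj u v := mem_edgeFinset.1 he
    let d : G.Dart := ⟨(u, v), huv⟩
    change Sym2.lift f d.edge = ∑ d' : G.Dart with d'.edge = d.edge, w d'.fst d'.snd
    rw [d.edge_fiber, Finset.sum_pair d.symm_ne.symm]
    exact hw u v huv

theorem sum_darts_eq_sum_sum_neighborFinset (w : V → V → M) :
    ∑ d : G.Dart, w d.fst d.snd = ∑ v, ∑ u ∈ G.neighborFinset v, w v u := by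
  classical
  rw [← Finset.sum_fiberwise (g := fun d : G.Dart => d.fst)]
  refine Finset.sum_congr rfl fun v _ => ?_
  refine (Finset.sum_congr (G.dart_fst_fiber v) fun _ _ => rfl).trans ?_
  rw [Finset.sum_image fun _ _ _ _ h => G.dartOfNeighborSet_injective v h,
    Finset.sum_subtype (G.neighborFinset v) (fun _ => mem_neighborFinset G v _)]
  rfl

end SimpleGraph

theorem Fintype.sum_comp_eq_sum_card_filter_mul {ι κ R : Type*} [Fintype ι] [DecidableEq κ]
    [NonAssocSemiring R] (f : ι → κ) (g : κ → R) (s : Finset κ) (hf : ∀ i, f i ∈ s) :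
    ∑ i, g (f i) = ∑ k ∈ s, ((Finset.univ.filter fun i => f i = k).card : R) * g k := by
  rw [← Finset.sum_fiberwise_of_maps_to (g := f) (t := s) fun i _ => hf i]
  refine Finset.sum_congr rfl fun k _ => ?_
  rw [Finset.sum_congr rfl fun i hi => congrArg g (Finset.mem_filter.1 hi).2, Finset.sum_const,
    nsmul_eq_mul]

noncomputable def agHalf (i j : ℕ) : ℝ := if i = 4 then 1 / 2 else agCost i j - 1 / 2

lemma agCost_four_four : agCost 4 4 = 1 := by
  rw [agCost, show ((4 : ℕ) : ℝ) * (4 : ℕ) = 4 ^ 2 by norm_num, Real.sqrt_sq (by norm_num)]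
  norm_num

lemma agHalf_add_agHalf {i j : ℕ} (h : i = 4 ∨ j = 4) : agHalf i j + agHalf j i = agCost i j := by
  rcases h with rfl | rfl
  · by_cases hj : j = 4
    · subst hj; norm_num [agHalf, agCost_four_four]
    · simp [agHalf, agCost_comm, hj]
  · by_cases hi : i = 4
    · subst hi; norm_num [agHalf, agCost_four_four]
    · simp [agHalf, hi]

lemma one_mul_agHalf_one_four : 1 * agHalf 1 4 = 3 / 4 := by
  norm_num [agHalf, agCost]

lemma two_mul_agHalf_two_four : 2 * agHalf 2 4 = 3 / Real.sqrt 2 - 1 := by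
  have h8 : Real.sqrt 8 = 2 * Real.sqrt 2 := by
    rw [show (8 : ℝ) = 2 ^ 2 * 2 by norm_num, Real.sqrt_mul (by norm_num),
      Real.sqrt_sq (by norm_num)]
  norm_num [agHalf, agCost, h8]
  field_simp
  ring

lemma three_mul_agHalf_three_four : 3 * agHalf 3 4 = 21 / (4 * Real.sqrt 3) - 3 / 2 := by
  have h12 : Real.sqrt 12 = 2 * Real.sqrt 3 := by
    rw [show (12 : ℝ) = 2 ^ 2 * 3 by norm_num, Real.sqrt_mul (by norm_num),
      Real.sqrt_sq (by norm_num)]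
  norm_num [agHalf, agCost, h12]
  field_simp
  ring

lemma four_mul_agHalf_four_four : 4 * agHalf 4 4 = 2 := by
  norm_num [agHalf]

namespace SimpleGraph

variable {V : Type*} [Fintype V] (G : SimpleGraph V) [DecidableRel G.Adj]

theorem agIndex_eq_sum_degree_mul_agHalf
    (hedge : ∀ u v, G.Adj u v → G.degree u = 4 ∨ G.degree v = 4) :
    agIndex G = ∑ v, G.degree v * agHalf (G.degree v) 4 := by
  rw [agIndex, G.sum_edgeFinset_lift_eq_sum_darts _ (fun u v => agHalf (G.degree u) (G.degree v))
    fun u v h => (agHalf_add_agHalf (hedge u v h)).symm,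
    G.sum_darts_eq_sum_sum_neighborFinset fun u v => agHalf (G.degree u) (G.degree v)]
  refine Finset.sum_congr rfl fun v _ => ?_
  have hnbr : ∀ u ∈ G.neighborFinset v,
      agHalf (G.degree v) (G.degree u) = agHalf (G.degree v) 4 := by
    intro u hu
    by_cases hv : G.degree v = 4
    · simp [agHalf, hv]
    · rw [(hedge v u ((G.mem_neighborFinset v u).1 hu)).resolve_left hv]
  rw [Finset.sum_congr rfl hnbr, Finset.sum_const, card_neighborFinset_eq_degree, nsmul_eq_mul]

end SimpleGraph

theorem stmt_15_general {V : Type*} [Fintype V]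
    (G : SimpleGraph V) [DecidableRel G.Adj]
    (hmax : ∀ v, G.degree v ≤ 4)
    (hiso : ∀ v, 1 ≤ G.degree v)
    (hedge : ∀ u v, G.Adj u v → G.degree u = 4 ∨ G.degree v = 4) :
    agIndex G =
      (3 / 4) * ((Finset.univ.filter fun v => G.degree v = 1).card : ℝ)
        + (3 / Real.sqrt 2 - 1) * ((Finset.univ.filter fun v => G.degree v = 2).card : ℝ)
        + (21 / (4 * Real.sqrt 3) - 3 / 2) * ((Finset.univ.filter fun v => G.degree v = 3).card : ℝ)
        + 2 * ((Finset.univ.filter fun v => G.degree v = 4).card : ℝ) := by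
  have hdeg : ∀ v, G.degree v ∈ ({1, 2, 3, 4} : Finset ℕ) := fun v => by
    have := hmax v; have := hiso v
    simp only [Finset.mem_insert, Finset.mem_singleton]
    omega
  rw [G.agIndex_eq_sum_degree_mul_agHalf hedge]
  refine (Fintype.sum_comp_eq_sum_card_filter_mul (fun v => G.degree v)
    (fun d : ℕ => d * agHalf d 4) _ hdeg).trans ?_
  rw [Finset.sum_insert (by decide), Finset.sum_insert (by decide), Finset.sum_insert (by decide),
    Finset.sum_singleton]
  push_cast
  rw [one_mul_agHalf_one_four, two_mul_agHalf_two_four, three_mul_agHalf_three_four,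
    four_mul_agHalf_four_four]
  ring

theorem stmt_15 {V : Type*} [Fintype V] [DecidableEq V]
    (G : SimpleGraph V) [DecidableRel G.Adj]
    (hmax : ∀ v, G.degree v ≤ 4)
    (hiso : ∀ v, 1 ≤ G.degree v)
    (hedge : ∀ u v, G.Adj u v → G.degree u = 4 ∨ G.degree v = 4) :
    agIndex G =
      (3 / 4) * ((Finset.univ.filter fun v => G.degree v = 1).card : ℝ)
        + (3 / Real.sqrt 2 - 1) * ((Finset.univ.filter fun v => G.degree v = 2).card : ℝ)
        + (21 / (4 * Real.sqrt 3) - 3 / 2) * ((Finset.univ.filter fun v => G.degree v = 3).card : ℝ)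
        + 2 * ((Finset.univ.filter fun v => G.degree v = 4).card : ℝ) :=
  stmt_15_general G hmax hiso hedge
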